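/- Let G be a simple graph on a finite vertex set V with m ≥ 1 edges, and let K ∈ ℕ. Define the simple graph G' on vertex set V × Fin(m+1) by making (u,i) adjacent to (v,j) if and only if i = j and u is adjacent to v in G (i.e., G' is the disjoint union of m+1 copies of G). Then: (i) G' has exactly m(m+1) edges and the maximum degree of G' equals the maximum degree of G, so that (maxDegree G')² < |E(G')|; and (ii) G' contains a clique of K vertices if and only if G contains a clique of K vertices. -/

import Mathlib

open SimpleGraph

/-- The disjoint union of `n` copies of the simple graph `G`: `(u,i)` is adjacent to
`(v,j)` iff `i = j` and `u` is adjacent to `v` in `G`. -/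
def copies {V : Type*} (G : SimpleGraph V) (n : ℕ) : SimpleGraph (V × Fin n) where
  Adj x y := x.2 = y.2 ∧ G.Adj x.1 y.1
  symm := ⟨fun x y h => ⟨h.1.symm, h.2.symm⟩⟩
  loopless := ⟨fun x h => G.loopless.irrefl x.1 h.2⟩

instance {V : Type*} (G : SimpleGraph V) [DecidableRel G.Adj] (n : ℕ) :
    DecidableRel (copies G n).Adj :=
  fun _ _ => instDecidableAnd

lemma copies_degree {V : Type*} [Fintype V] [DecidableEq V] (G : SimpleGraph V)
    [DecidableRel G.Adj] (n : ℕ) (v : V) (i : Fin n) :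
    (copies G n).degree (v, i) = G.degree v := by
  have h : (copies G n).neighborFinset (v, i) = (G.neighborFinset v).image (fun u => (u, i)) := by
    ext ⟨u, j⟩
    rw [mem_neighborFinset]
    simp only [mem_neighborFinset, copies, Finset.mem_image, Prod.ext_iff]
    aesop
  rw [← card_neighborFinset_eq_degree, ← card_neighborFinset_eq_degree, h,
    Finset.card_image_of_injective _ (fun a b hab => (Prod.ext_iff.mp hab).1)]

/-- Core of the reduction showing that Clique remains NP-complete on graphs with
`d_max < √m`: the graph `G'` made of `m+1` disjoint copies of `G` has `m(m+1)` edges,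
the same maximum degree as `G` (hence `(maxDegree G')² < |E(G')|`), and it contains a
clique of `K` vertices iff `G` does. -/
theorem clique_copies_reduction {V : Type*} [Fintype V] [DecidableEq V]
    (G : SimpleGraph V) [DecidableRel G.Adj] (m K : ℕ)
    (hm : m = G.edgeFinset.card) (hm1 : 1 ≤ m) :
    (copies G (m + 1)).edgeFinset.card = m * (m + 1) ∧
    (copies G (m + 1)).maxDegree = G.maxDegree ∧
    ((copies G (m + 1)).maxDegree) ^ 2 < (copies G (m + 1)).edgeFinset.card ∧
    ((∃ s : Finset (V × Fin (m + 1)), (copies G (m + 1)).IsNClique K s) ↔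
      ∃ s : Finset V, G.IsNClique K s) := by
  have hedges : (copies G (m + 1)).edgeFinset.card = m * (m + 1) := by
    have h2 := SimpleGraph.sum_degrees_eq_twice_card_edges (copies G (m + 1))
    have h1 := SimpleGraph.sum_degrees_eq_twice_card_edges G
    have hsum : ∑ x : V × Fin (m + 1), (copies G (m + 1)).degree x
        = (m + 1) * (2 * m) := by
      rw [Fintype.sum_prod_type]
      simp only [copies_degree]
      rw [Finset.sum_comm]
      simp [h1, ← hm, Finset.sum_const, mul_comm]
    have h3 : 2 * (copies G (m + 1)).edgeFinset.card = 2 * (m * (m + 1)) := by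
      rw [← h2, hsum]; ring
    omega
  have hmax : (copies G (m + 1)).maxDegree = G.maxDegree := by
    apply le_antisymm
    · apply SimpleGraph.maxDegree_le_of_forall_degree_le
      intro ⟨v, i⟩
      rw [copies_degree]
      exact G.degree_le_maxDegree v
    · apply SimpleGraph.maxDegree_le_of_forall_degree_le
      intro v
      rw [← copies_degree G (m + 1) v 0]
      exact (copies G (m + 1)).degree_le_maxDegree (v, 0)
  refine ⟨hedges, hmax, ?_, ?_⟩
  · have hd : G.maxDegree ≤ m := by
      apply SimpleGraph.maxDegree_le_of_forall_degree_le
      intro v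
      rw [hm, ← G.card_incidenceFinset_eq_degree v]
      refine Finset.card_le_card ?_
      simp only [SimpleGraph.incidenceFinset, Finset.subset_iff, Set.mem_toFinset,
        SimpleGraph.mem_edgeFinset]
      exact fun {e} he => G.incidenceSet_subset v he
    rw [hedges, hmax, pow_two]
    calc G.maxDegree * G.maxDegree ≤ m * m := Nat.mul_le_mul hd hd
      _ < m * (m + 1) := by nlinarith
  · constructor
    · rintro ⟨s, hs⟩
      refine ⟨s.image Prod.fst, ?_, ?_⟩
      · intro a ha b hb hab
        simp only [Finset.coe_image, Set.mem_image, Finset.mem_coe] at ha hb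
        obtain ⟨x, hx, rfl⟩ := ha
        obtain ⟨y, hy, rfl⟩ := hb
        have hxy : x ≠ y := fun h => hab (by rw [h])
        exact (hs.1 hx hy hxy).2
      · rw [Finset.card_image_of_injOn, hs.2]
        intro x hx y hy hxy
        by_contra hne
        exact G.loopless.irrefl x.1 (hxy ▸ (hs.1 hx hy hne).2)
    · rintro ⟨s, hs⟩
      refine ⟨s.map ⟨fun v => (v, (0 : Fin (m + 1))), fun a b h => (Prod.ext_iff.mp h).1⟩, ?_, ?_⟩
      · intro a ha b hb hab
        simp only [Finset.coe_map, Set.mem_image, Finset.mem_coe,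
          Function.Embedding.coeFn_mk] at ha hb
        obtain ⟨x, hx, rfl⟩ := ha
        obtain ⟨y, hy, rfl⟩ := hb
        have hxy : x ≠ y := fun h => hab (by rw [h])
        exact ⟨rfl, hs.1 hx hy hxy⟩
      · rw [Finset.card_map, hs.2]
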